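/- Let α : ℕ → ℝ satisfy 0 < α_n ≤ 1 for all n and suppose the sequence (α_n) converges (in particular this holds if α is non-decreasing). Define the Aluthge-transform weight sequence β by β_n = √(α_n · α_{n+1}). Then (ln β_n)_n is completely alternating if and only if (ln α_n)_n is completely alternating. (Equivalently: the Aluthge transform of a contractive weighted shift whose weights approach a limit is moment infinitely divisible if and only if the shift itself is.) -/
import Mathlib


/-- The `n`-th iterated forward difference of a sequence, evaluated at `k`. -/
noncomputable def fdiff (a : ℕ → ℝ) (n k : ℕ) : ℝ :=
  ∑ i ∈ Finset.range (n + 1), (-1 : ℝ) ^ i * (n.choose i : ℝ) * a (k + i)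

/-- A sequence is completely alternating if all iterated forward differences of
order `n ≥ 1` are nonpositive. -/
def CompletelyAlternating (a : ℕ → ℝ) : Prop :=
  ∀ n : ℕ, 1 ≤ n → ∀ k : ℕ, fdiff a n k ≤ 0

lemma fdiff_succ (a : ℕ → ℝ) (n k : ℕ) :
    fdiff a (n + 1) k = fdiff a n k - fdiff a n (k + 1) := by
  unfold fdiff
  rw [Finset.sum_range_succ' (fun i => (-1 : ℝ) ^ i * ((n+1).choose i : ℝ) * a (k + i)) (n+1),
      Finset.sum_range_succ' (fun i => (-1 : ℝ) ^ i * (n.choose i : ℝ) * a (k + i)) n]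
  have h1 : ∑ i ∈ Finset.range (n+1), (-1:ℝ)^(i+1) * ((n+1).choose (i+1) : ℝ) * a (k + (i+1))
      = ∑ i ∈ Finset.range (n+1), ((-1:ℝ)^(i+1) * (n.choose i : ℝ) * a (k+1+i)
        + (-1:ℝ)^(i+1) * (n.choose (i+1) : ℝ) * a (k + (i+1))) := by
    refine Finset.sum_congr rfl fun i _ => ?_
    have : ((n+1).choose (i+1) : ℝ) = (n.choose i : ℝ) + (n.choose (i+1) : ℝ) := by
      rw [Nat.choose_succ_succ]; push_cast; ring
    have hk : k + (i+1) = k + 1 + i := by omega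
    rw [this, hk]; ring
  rw [h1, Finset.sum_add_distrib]
  have h2 : ∑ i ∈ Finset.range (n+1), (-1:ℝ)^(i+1) * (n.choose (i+1) : ℝ) * a (k + (i+1))
      = ∑ i ∈ Finset.range n, (-1:ℝ)^(i+1) * (n.choose (i+1) : ℝ) * a (k + (i+1)) := by
    rw [Finset.sum_range_succ]
    simp [Nat.choose_succ_self]
  have h3 : ∑ i ∈ Finset.range (n+1), (-1:ℝ)^(i+1) * (n.choose i : ℝ) * a (k+1+i)
      = - ∑ i ∈ Finset.range (n+1), (-1:ℝ)^i * (n.choose i : ℝ) * a (k+1+i) := by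
    rw [← Finset.sum_neg_distrib]
    refine Finset.sum_congr rfl fun i _ => by ring
  rw [h2, h3]
  ring_nf
  simp
  ring

lemma fdiff_one (a : ℕ → ℝ) (k : ℕ) : fdiff a 1 k = a k - a (k + 1) := by
  have h := fdiff_succ a 0 k
  simpa [fdiff] using h

lemma fdiff_avg (a : ℕ → ℝ) (n k : ℕ) :
    fdiff (fun m => (a m + a (m+1)) / 2) n k = (fdiff a n k + fdiff a n (k+1)) / 2 := by
  unfold fdiff
  rw [← Finset.sum_add_distrib, Finset.sum_div]
  refine Finset.sum_congr rfl fun i _ => ?_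
  have hk : k + 1 + i = k + i + 1 := by omega
  rw [hk]; ring

lemma alt_sum_zero (n : ℕ) (hn : 1 ≤ n) :
    ∑ i ∈ Finset.range (n + 1), (-1 : ℝ) ^ i * (n.choose i : ℝ) = 0 := by
  have h := Int.alternating_sum_range_choose (n := n)
  rw [if_neg (by omega)] at h
  have h2 : ((∑ i ∈ Finset.range (n + 1), (-1 : ℤ) ^ i * (n.choose i : ℤ) : ℤ) : ℝ) = 0 := by
    rw [h]; norm_num
  push_cast at h2
  exact h2

lemma fdiff_tendsto_zero (a : ℕ → ℝ) (A : ℝ) (ha : Filter.Tendsto a Filter.atTop (nhds A))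
    (n : ℕ) (hn : 1 ≤ n) :
    Filter.Tendsto (fun k => fdiff a n k) Filter.atTop (nhds 0) := by
  have h : Filter.Tendsto (fun k => fdiff a n k) Filter.atTop
      (nhds (∑ i ∈ Finset.range (n+1), (-1:ℝ)^i * (n.choose i : ℝ) * A)) := by
    apply tendsto_finset_sum
    intro i _
    exact (ha.comp (Filter.tendsto_add_atTop_nat i)).const_mul _
  rwa [show ∑ i ∈ Finset.range (n+1), (-1:ℝ)^i * (n.choose i : ℝ) * A = 0 by
    rw [← Finset.sum_mul, alt_sum_zero n hn, zero_mul]] at h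

theorem stmt5 (α : ℕ → ℝ) (hα : ∀ n, 0 < α n) (hα1 : ∀ n, α n ≤ 1)
    (hlim : ∃ L : ℝ, Filter.Tendsto α Filter.atTop (nhds L)) :
    CompletelyAlternating (fun n => Real.log (Real.sqrt (α n * α (n + 1)))) ↔
      CompletelyAlternating (fun n => Real.log (α n)) := by
  set a : ℕ → ℝ := fun n => Real.log (α n) with ha_def
  have hbeq : (fun n => Real.log (Real.sqrt (α n * α (n + 1))))
      = fun m => (a m + a (m + 1)) / 2 := by
    funext m
    rw [Real.log_sqrt (mul_nonneg (hα m).le (hα (m+1)).le),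
        Real.log_mul (hα m).ne' (hα (m+1)).ne']
  rw [hbeq]
  constructor
  · intro hb n hn k
    -- b is nondecreasing, so a is bounded below
    set b : ℕ → ℝ := fun m => (a m + a (m + 1)) / 2 with hb_def
    have hmono : Monotone b := by
      apply monotone_nat_of_le_succ
      intro m
      have := hb 1 le_rfl m
      rw [fdiff_one] at this
      linarith
    have ha_nonpos : ∀ m, a m ≤ 0 := fun m => Real.log_nonpos (hα m).le (hα1 m)
    have ha_lb : ∀ m, 2 * b 0 ≤ a m := by
      intro m
      have h1 : b 0 ≤ b m := hmono (Nat.zero_le m)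
      have h2 : b m = (a m + a (m + 1)) / 2 := rfl
      have := ha_nonpos (m + 1)
      linarith
    obtain ⟨L, hL⟩ := hlim
    have hαlb : ∀ m, Real.exp (2 * b 0) ≤ α m := by
      intro m
      calc Real.exp (2 * b 0) ≤ Real.exp (a m) := Real.exp_le_exp.mpr (ha_lb m)
        _ = α m := Real.exp_log (hα m)
    have hLpos : 0 < L :=
      lt_of_lt_of_le (Real.exp_pos _) (ge_of_tendsto' hL hαlb)
    have ha_tendsto : Filter.Tendsto a Filter.atTop (nhds (Real.log L)) :=
      hL.log hLpos.ne'
    have hfz := fdiff_tendsto_zero a (Real.log L) ha_tendsto n hn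
    -- key step: fdiff a n m ≤ fdiff a n (m + 2)
    have hstep : ∀ m, fdiff a n m ≤ fdiff a n (m + 2) := by
      intro m
      have h1 : fdiff b (n+1) m = (fdiff a (n+1) m + fdiff a (n+1) (m+1)) / 2 := fdiff_avg a (n+1) m
      have h2 := fdiff_succ a n m
      have h3 := fdiff_succ a n (m+1)
      have h4 := hb (n+1) (by omega) m
      have hm : m + 1 + 1 = m + 2 := by omega
      rw [hm] at h3
      rw [h1, h2, h3] at h4
      linarith
    have hchain : ∀ T, fdiff a n k ≤ fdiff a n (k + 2 * T) := by
      intro T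
      induction T with
      | zero => simp
      | succ t ih =>
        have : k + 2 * (t + 1) = k + 2 * t + 2 := by omega
        rw [this]
        exact ih.trans (hstep _)
    have htend : Filter.Tendsto (fun T => fdiff a n (k + 2 * T)) Filter.atTop (nhds 0) := by
      apply hfz.comp
      exact (strictMono_nat_of_lt_succ (fun t => by omega)).tendsto_atTop
    exact ge_of_tendsto' htend hchain
  · intro ha n hn k
    rw [fdiff_avg]
    have h1 := ha n hn k
    have h2 := ha n hn (k + 1)
    linarith
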